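/- Every endomorphism φ of F₂ lying in the submonoid of End(F₂) generated by T̂₁ and T̂₂ (i.e. every finite composition of copies of T̂₁ and T̂₂) sends both generators a and b to positive words, fixes the commutator κ (φ(κ) = κ), and is an automorphism of F₂. -/

import Mathlib

/-!
Each of the three properties cuts out a submonoid of `End(F₂)`: the endomorphisms mapping the
monoid of positive words into itself (which can be checked on the generators `a`, `b`), the
endomorphisms fixing `κ`, and the units. It therefore suffices to check `T̂₁` and `T̂₂`: both
fix `κ` by a direct computation, and they are inverted by `a ↦ a·b⁻¹` and `b ↦ b·a⁻¹`.
-/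

/-- The free group on two generators. -/
abbrev F2 := FreeGroup (Fin 2)

/-- The first generator `a` of `F₂`. -/
def a : F2 := FreeGroup.of 0

/-- The second generator `b` of `F₂`. -/
def b : F2 := FreeGroup.of 1

/-- The commutator `κ = a·b·a⁻¹·b⁻¹`. -/
def kappa : F2 := a * b * a⁻¹ * b⁻¹

/-- An element of `F₂` is a positive word if it lies in the submonoid generated by the
generators `a` and `b`. -/
def IsPositiveWord (x : F2) : Prop := x ∈ Submonoid.closure ({a, b} : Set F2)

/-- The endomorphism `T̂₁` of `F₂` determined by `a ↦ a·b`, `b ↦ b`. -/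
def T1hat : Monoid.End F2 := FreeGroup.lift fun i => if i = 0 then a * b else b

/-- The endomorphism `T̂₂` of `F₂` determined by `a ↦ a`, `b ↦ b·a`. -/
def T2hat : Monoid.End F2 := FreeGroup.lift fun i => if i = 0 then a else b * a

namespace Monoid.End

variable {M : Type*} [Monoid M]

def fixing (x : M) : Submonoid (Monoid.End M) where
  carrier := {f | f x = x}
  mul_mem' {f g} (hf : f x = x) (hg : g x = x) := show f (g x) = x by rw [hg, hf]
  one_mem' := rfl

def preserving (P : Submonoid M) : Submonoid (Monoid.End M) where
  carrier := {f | Set.MapsTo f P P}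
  mul_mem' hf hg := hf.comp hg
  one_mem' := Set.mapsTo_id _

theorem mem_preserving_closure {s : Set M} {f : Monoid.End M} :
    f ∈ preserving (Submonoid.closure s) ↔ ∀ x ∈ s, f x ∈ Submonoid.closure s :=
  ⟨fun hf _ hx => hf (Submonoid.subset_closure hx), fun hs _ hx =>
    (Submonoid.closure_le (S := (Submonoid.closure s).comap (f : M →* M))).mpr hs hx⟩

theorem bijective_of_isUnit {f : Monoid.End M} (hf : IsUnit f) : Function.Bijective f := by
  obtain ⟨g, hfg, hgf⟩ := isUnit_iff_exists.mp hf
  exact Function.bijective_iff_has_inverse.mpr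
    ⟨g, fun x => DFunLike.congr_fun hgf x, fun x => DFunLike.congr_fun hfg x⟩

end Monoid.End

open Monoid.End

theorem F2.end_ext {f g : Monoid.End F2} (ha : f a = g a) (hb : f b = g b) : f = g :=
  FreeGroup.ext_hom (M := F2) f g fun i => by fin_cases i <;> assumption

theorem a_mem_closure : a ∈ Submonoid.closure {a, b} := Submonoid.subset_closure (by simp)

theorem b_mem_closure : b ∈ Submonoid.closure {a, b} := Submonoid.subset_closure (by simp)

@[simp] theorem T1hat_a : T1hat a = a * b := FreeGroup.lift_apply_of
@[simp] theorem T1hat_b : T1hat b = b := FreeGroup.lift_apply_of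
@[simp] theorem T2hat_a : T2hat a = a := FreeGroup.lift_apply_of
@[simp] theorem T2hat_b : T2hat b = b * a := FreeGroup.lift_apply_of

theorem T1hat_mem_preserving : T1hat ∈ preserving (Submonoid.closure {a, b}) := by
  rw [mem_preserving_closure]
  rintro x (rfl | rfl)
  exacts [T1hat_a ▸ mul_mem a_mem_closure b_mem_closure, T1hat_b ▸ b_mem_closure]

theorem T2hat_mem_preserving : T2hat ∈ preserving (Submonoid.closure {a, b}) := by
  rw [mem_preserving_closure]
  rintro x (rfl | rfl)
  exacts [T2hat_a ▸ a_mem_closure, T2hat_b ▸ mul_mem b_mem_closure a_mem_closure]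

theorem T1hat_kappa : T1hat kappa = kappa := by
  simp only [kappa, map_mul, map_inv, T1hat_a, T1hat_b]
  group

theorem T2hat_kappa : T2hat kappa = kappa := by
  simp only [kappa, map_mul, map_inv, T2hat_a, T2hat_b]
  group

theorem isUnit_T1hat : IsUnit T1hat := by
  let S : Monoid.End F2 := FreeGroup.lift fun i => if i = 0 then a * b⁻¹ else b
  have hSa : S a = a * b⁻¹ := FreeGroup.lift_apply_of
  have hSb : S b = b := FreeGroup.lift_apply_of
  refine isUnit_iff_exists.mpr ⟨S, F2.end_ext ?_ ?_, F2.end_ext ?_ ?_⟩ <;> simp [hSa, hSb]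

theorem isUnit_T2hat : IsUnit T2hat := by
  let S : Monoid.End F2 := FreeGroup.lift fun i => if i = 0 then a else b * a⁻¹
  have hSa : S a = a := FreeGroup.lift_apply_of
  have hSb : S b = b * a⁻¹ := FreeGroup.lift_apply_of
  refine isUnit_iff_exists.mpr ⟨S, F2.end_ext ?_ ?_, F2.end_ext ?_ ?_⟩ <;> simp [hSa, hSb]

/-- Every endomorphism of `F₂` lying in the submonoid of `End(F₂)` generated by `T̂₁` and
`T̂₂` sends both generators to positive words, fixes the commutator `κ` exactly, and is an
automorphism of `F₂`. -/
theorem mem_closure_T1hat_T2hat_properties (φ : Monoid.End F2)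
    (hφ : φ ∈ Submonoid.closure ({T1hat, T2hat} : Set (Monoid.End F2))) :
    IsPositiveWord (φ a) ∧ IsPositiveWord (φ b) ∧ φ kappa = kappa ∧
      Function.Bijective φ := by
  have hgen : {T1hat, T2hat} ⊆ ((preserving (Submonoid.closure {a, b}) ⊓ fixing kappa ⊓
      IsUnit.submonoid (Monoid.End F2) : Submonoid (Monoid.End F2)) : Set (Monoid.End F2)) := by
    rintro ψ (rfl | rfl)
    exacts [⟨⟨T1hat_mem_preserving, T1hat_kappa⟩, isUnit_T1hat⟩,
      ⟨⟨T2hat_mem_preserving, T2hat_kappa⟩, isUnit_T2hat⟩]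
  obtain ⟨⟨hpos, hκ⟩, hunit⟩ := Submonoid.closure_le.mpr hgen hφ
  exact ⟨hpos a_mem_closure, hpos b_mem_closure, hκ, bijective_of_isUnit hunit⟩
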